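/- arXiv:1306.0433 — 3 statements merged into one kernel-verified Lean document; each statement's English description precedes it below -/
import Mathlib

section
/- Let λ > 0, μ > 0, λ ≠ 1, and set D = (1 + λ − μ⁻¹)² + 4(1 − λ). If D < 0, then the only fixed points of Φ_{λ,μ} are (1, 0) and (1/λ, 0). If D ≥ 0 and μ ∉ {1, λ}, then the fixed points of Φ_{λ,μ} with y ≠ 0 are exactly the points (x, x − 1/μ) where x = ((μ⁻¹ − λ − 1) + √D)/(2(1 − λ)) or x = ((μ⁻¹ − λ − 1) − √D)/(2(1 − λ)). -/
/-! Off the axis `y = 0` the second coordinate of a fixed point forces `μ(x − y) = 1`, and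
substituting `y = x − 1/μ` into the first coordinate leaves the quadratic
`(1 − λ)x² + (1 + λ − μ⁻¹)x − 1 = 0`, whose discriminant is `D`. On the axis the fixed points
are the roots `1` and `1/λ` of `(x − 1)(λx − 1)`. The conditions `μ ≠ 1, λ` say exactly that
`x = 1/μ`, the root of the quadratic lying on the axis, is excluded. -/

noncomputable section

/-- The planar R-S flip-flop model map `Φ_{λ,μ}(x,y) = (1 − x(λ(1−x) + y), μy(x − y))`. -/
def Phi (l m : ℝ) (p : ℝ × ℝ) : ℝ × ℝ :=
  (1 - p.1 * (l * (1 - p.1) + p.2), m * p.2 * (p.1 - p.2))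

/-- The discriminant D = (1 + λ − μ⁻¹)² + 4(1 − λ). -/
def Ddisc (l m : ℝ) : ℝ := (1 + l - m⁻¹) ^ 2 + 4 * (1 - l)

namespace Phi

variable {l m x y : ℝ}

theorem Ddisc_eq_discrim (l m : ℝ) : Ddisc l m = discrim (1 - l) (1 + l - m⁻¹) (-1) := by
  rw [Ddisc, discrim]
  ring

theorem eq_one_or_eq_one_div_of_fixed_of_snd_eq_zero (h : Phi l m (x, 0) = (x, 0)) :
    x = 1 ∨ x = 1 / l := by
  have hfac : (x - 1) * (l * x - 1) = 0 := by
    rw [Phi, Prod.mk.injEq] at h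
    linear_combination h.1
  rcases mul_eq_zero.mp hfac with hx | hlx
  · exact .inl (by linarith)
  · exact .inr (eq_one_div_of_mul_eq_one_right (by linarith))

theorem fixed_iff_of_snd_ne_zero (hm : m ≠ 0) (hy : y ≠ 0) :
    Phi l m (x, y) = (x, y) ↔
      y = x - 1 / m ∧ (1 - l) * (x * x) + (1 + l - m⁻¹) * x + -1 = 0 := by
  have hsnd : m * y * (x - y) = y ↔ y = x - 1 / m := by
    rw [eq_sub_iff_add_eq, ← eq_sub_iff_add_eq', div_eq_iff hm]
    constructor
    · intro h
      exact mul_left_cancel₀ hy (by linear_combination -h)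
    · intro h
      linear_combination -y * h
  simp only [Phi, Prod.mk.injEq]
  rw [hsnd, and_comm]
  refine and_congr_right fun hxy => ?_
  subst hxy
  constructor <;> intro h <;> field_simp at h ⊢ <;> linear_combination -h

theorem quadratic_at_one_div_ne_zero (hm : m ≠ 0) (hm1 : m ≠ 1) (hml : m ≠ l) :
    (1 - l) * (1 / m * (1 / m)) + (1 + l - m⁻¹) * (1 / m) + -1 ≠ 0 := by
  have hfac : (1 - l) * (1 / m * (1 / m)) + (1 + l - m⁻¹) * (1 / m) + -1 =
      -((m - 1) * (m - l)) / m ^ 2 := by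
    field_simp
    ring
  rw [hfac, div_ne_zero_iff, neg_ne_zero]
  exact ⟨mul_ne_zero (sub_ne_zero.mpr hm1) (sub_ne_zero.mpr hml), pow_ne_zero 2 hm⟩

theorem fixed_and_snd_ne_zero_iff (hm : m ≠ 0) (hm1 : m ≠ 1) (hml : m ≠ l) :
    (Phi l m (x, y) = (x, y) ∧ y ≠ 0) ↔
      y = x - 1 / m ∧ (1 - l) * (x * x) + (1 + l - m⁻¹) * x + -1 = 0 := by
  constructor
  · rintro ⟨h, hy⟩
    exact (fixed_iff_of_snd_ne_zero hm hy).mp h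
  · rintro ⟨hxy, hq⟩
    have hy : y ≠ 0 := by
      rintro rfl
      obtain rfl : x = 1 / m := by linarith
      exact quadratic_at_one_div_ne_zero hm hm1 hml hq
    exact ⟨(fixed_iff_of_snd_ne_zero hm hy).mpr ⟨hxy, hq⟩, hy⟩

end Phi

open Phi in
theorem stmt_3_general (l m : ℝ) (hm : 0 < m) (hl1 : l ≠ 1) :
    (Ddisc l m < 0 → ∀ p : ℝ × ℝ, Phi l m p = p → p = (1, 0) ∨ p = (1 / l, 0)) ∧
    (0 ≤ Ddisc l m → m ≠ 1 → m ≠ l →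
      ∀ x y : ℝ, (Phi l m (x, y) = (x, y) ∧ y ≠ 0) ↔
        (y = x - 1 / m ∧
          (x = ((m⁻¹ - l - 1) + Real.sqrt (Ddisc l m)) / (2 * (1 - l)) ∨
            x = ((m⁻¹ - l - 1) - Real.sqrt (Ddisc l m)) / (2 * (1 - l))))) := by
  constructor
  · rintro hD ⟨x, y⟩ h
    by_cases hy : y = 0
    · subst hy
      rcases eq_one_or_eq_one_div_of_fixed_of_snd_eq_zero h with rfl | rfl <;> simp
    · refine absurd ((fixed_iff_of_snd_ne_zero hm.ne' hy).mp h).2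
        (quadratic_ne_zero_of_discrim_ne_sq (fun s hs => ?_) x)
      rw [← Ddisc_eq_discrim] at hs
      linarith [sq_nonneg s]
  · intro hD hm1 hml x y
    have hsqrt : discrim (1 - l) (1 + l - m⁻¹) (-1) = √(Ddisc l m) * √(Ddisc l m) := by
      rw [← Ddisc_eq_discrim, Real.mul_self_sqrt hD]
    rw [fixed_and_snd_ne_zero_iff hm.ne' hm1 hml,
      quadratic_eq_zero_iff (sub_ne_zero.mpr hl1.symm) hsqrt,
      show -(1 + l - m⁻¹) = m⁻¹ - l - 1 by ring]

/-- For λ > 0, μ > 0, λ ≠ 1: if D < 0 the only fixed points of Φ_{λ,μ} are (1,0) and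
(1/λ,0); if D ≥ 0 and μ ∉ {1, λ}, the fixed points with y ≠ 0 are exactly the points
`(x, x − 1/μ)` with `x = ((μ⁻¹ − λ − 1) ± √D)/(2(1 − λ))`. -/
theorem stmt_3 (l m : ℝ) (hl : 0 < l) (hm : 0 < m) (hl1 : l ≠ 1) :
    (Ddisc l m < 0 → ∀ p : ℝ × ℝ, Phi l m p = p → p = (1, 0) ∨ p = (1 / l, 0)) ∧
    (0 ≤ Ddisc l m → m ≠ 1 → m ≠ l →
      ∀ x y : ℝ, (Phi l m (x, y) = (x, y) ∧ y ≠ 0) ↔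
        (y = x - 1 / m ∧
          (x = ((m⁻¹ - l - 1) + Real.sqrt (Ddisc l m)) / (2 * (1 - l)) ∨
            x = ((m⁻¹ - l - 1) - Real.sqrt (Ddisc l m)) / (2 * (1 - l))))) :=
  stmt_3_general l m hm hl1
end
end

section
/- Let λ > 0 and μ > 0. For every point p ∈ ℝ², the preimage Φ_{λ,μ}⁻¹({p}) is a finite set containing at most four points. -/
/-!
Write `Φ(x, y) = (a, b)` and `c = 1 - a`, so that `x (λ(1 - x) + y) = c` and
`μ y (x - y) = b`. If `c ≠ 0`, then `x ≠ 0` and `xy = c - λx + λx²` fixes `y`; multiplying the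
second equation by `x²` turns it into a quartic equation in `x` with constant term `-μc² ≠ 0`.
If `c = 0`, then either `x = 0` and `-μy² = b`, or `y = λ(x - 1)` and
`λb = μ(1 - λ)y² + μλy`: two quadratic equations in `y`, with nonzero coefficient of `y²`,
resp. `y`. In each case the points of the fibre are told apart by one coordinate, which is a
root of a nonzero polynomial, so there are at most `4 = 2 + 2` of them.
-/

noncomputable section

open Polynomial

theorem Set.finite_and_ncard_le_of_injOn_isRoot {α R : Type*} [CommRing R] [IsDomain R]
    {s : Set α} {f : α → R} {P : R[X]} {n : ℕ} (hP : P ≠ 0) (hdeg : P.natDegree ≤ n)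
    (hroot : ∀ a ∈ s, P.IsRoot (f a)) (hinj : s.InjOn f) : s.Finite ∧ s.ncard ≤ n := by
  classical
  have hmaps : ∀ a ∈ s, f a ∈ (P.roots.toFinset : Set R) := fun a ha => by
    simpa [Polynomial.mem_roots hP] using hroot a ha
  refine ⟨Set.Finite.of_finite_image ((P.roots.toFinset.finite_toSet).subset
    (Set.image_subset_iff.mpr hmaps)) hinj, ?_⟩
  calc s.ncard ≤ (P.roots.toFinset : Set R).ncard :=
        Set.ncard_le_ncard_of_injOn f hmaps hinj P.roots.toFinset.finite_toSet
    _ ≤ n := by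
        rw [Set.ncard_coe_finset]
        exact (Multiset.toFinset_card_le _).trans (P.card_roots'.trans hdeg)

section Fibre

variable {l m : ℝ} {p q : ℝ × ℝ}

theorem Phi_eq_iff :
    Phi l m q = p ↔ q.1 * (l * (1 - q.1) + q.2) = 1 - p.1 ∧ m * q.2 * (q.1 - q.2) = p.2 := by
  simp only [Phi, Prod.ext_iff]
  constructor <;> rintro ⟨h₁, h₂⟩ <;> constructor <;> linarith

theorem finite_and_ncard_le_two_preimage_Phi_inter_fst_eq_zero (hm : m ≠ 0) :
    (Phi l m ⁻¹' {p} ∩ {q | q.1 = 0}).Finite ∧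
      (Phi l m ⁻¹' {p} ∩ {q | q.1 = 0}).ncard ≤ 2 := by
  refine Set.finite_and_ncard_le_of_injOn_isRoot (f := Prod.snd) (P := C m * X ^ 2 + C p.2)
    (fun h => hm (by simpa using congrArg (coeff · 2) h)) (by compute_degree) ?_ ?_
  · rintro q ⟨hq, hx : q.1 = 0⟩
    have h₂ := (Phi_eq_iff.mp hq).2
    rw [hx] at h₂
    simp only [IsRoot, eval_add, eval_mul, eval_C, eval_pow, eval_X]
    linear_combination -h₂
  · rintro q ⟨-, hx : q.1 = 0⟩ q' ⟨-, hx' : q'.1 = 0⟩ hy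
    exact Prod.ext (hx.trans hx'.symm) hy

theorem finite_and_ncard_le_two_preimage_Phi_diff_fst_eq_zero (hl : l ≠ 0) (hm : m ≠ 0)
    (hp : p.1 = 1) :
    (Phi l m ⁻¹' {p} \ {q | q.1 = 0}).Finite ∧
      (Phi l m ⁻¹' {p} \ {q | q.1 = 0}).ncard ≤ 2 := by
  have hy : ∀ q ∈ Phi l m ⁻¹' {p} \ {q | q.1 = 0}, q.2 = l * (q.1 - 1) := by
    rintro q ⟨hq, hx : q.1 ≠ 0⟩
    have h₁ := (Phi_eq_iff.mp hq).1
    rw [hp, sub_self, mul_eq_zero] at h₁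
    linarith [h₁.resolve_left hx]
  refine Set.finite_and_ncard_le_of_injOn_isRoot (f := Prod.snd)
    (P := C (m * (1 - l)) * X ^ 2 + C (m * l) * X - C (l * p.2))
    (by
      intro h
      have h₁ := congrArg (coeff · 1) h
      simp only [coeff_add, coeff_sub, coeff_C_mul, coeff_X_pow, coeff_X_one, coeff_C,
        coeff_zero] at h₁
      norm_num [hm, hl] at h₁)
    (by compute_degree) ?_ ?_
  · intro q hq
    have h₂ := (Phi_eq_iff.mp hq.1).2
    simp only [IsRoot, eval_sub, eval_add, eval_mul, eval_C, eval_pow, eval_X]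
    linear_combination l * h₂ + m * q.2 * hy q hq
  · intro q hq q' hq' hqq'
    have hx : l * (q.1 - 1) = l * (q'.1 - 1) := by rw [← hy q hq, ← hy q' hq', hqq']
    exact Prod.ext (by linarith [mul_left_cancel₀ hl hx]) hqq'

theorem finite_and_ncard_le_four_preimage_Phi_of_fst_eq_one (hl : l ≠ 0) (hm : m ≠ 0)
    (hp : p.1 = 1) : (Phi l m ⁻¹' {p}).Finite ∧ (Phi l m ⁻¹' {p}).ncard ≤ 4 := by
  obtain ⟨hfin₀, hcard₀⟩ :=
    finite_and_ncard_le_two_preimage_Phi_inter_fst_eq_zero (l := l) (p := p) hm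
  obtain ⟨hfin₁, hcard₁⟩ := finite_and_ncard_le_two_preimage_Phi_diff_fst_eq_zero hl hm hp
  rw [← Set.inter_union_sdiff (Phi l m ⁻¹' {p}) {q | q.1 = 0}]
  exact ⟨hfin₀.union hfin₁, (Set.ncard_union_le _ _).trans (by omega)⟩

theorem finite_and_ncard_le_four_preimage_Phi_of_fst_ne_one (hm : m ≠ 0) (hp : p.1 ≠ 1) :
    (Phi l m ⁻¹' {p}).Finite ∧ (Phi l m ⁻¹' {p}).ncard ≤ 4 := by
  have hc : 1 - p.1 ≠ 0 := sub_ne_zero.mpr (Ne.symm hp)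
  have hxy : ∀ q ∈ Phi l m ⁻¹' {p}, q.1 * q.2 = (1 - p.1) - l * q.1 + l * q.1 ^ 2 := by
    intro q hq
    linear_combination (Phi_eq_iff.mp hq).1
  have hx : ∀ q ∈ Phi l m ⁻¹' {p}, q.1 ≠ 0 := by
    intro q hq h0
    have := hxy q hq
    rw [h0] at this
    exact hc (by linarith)
  refine Set.finite_and_ncard_le_of_injOn_isRoot (f := Prod.fst)
    (P := C m * (C l * X ^ 2 - C l * X + C (1 - p.1)) *
      (C (1 - l) * X ^ 2 + C l * X - C (1 - p.1)) - C p.2 * X ^ 2)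
    (by
      intro h
      have h₀ := congrArg (eval 0) h
      simp only [eval_sub, eval_add, eval_mul, eval_C, eval_pow, eval_X, eval_zero] at h₀
      exact mul_ne_zero hm (mul_ne_zero hc hc) (by linear_combination -h₀))
    (by compute_degree) ?_ ?_
  · intro q hq
    have h₂ := (Phi_eq_iff.mp hq).2
    simp only [IsRoot, eval_sub, eval_add, eval_mul, eval_C, eval_pow, eval_X]
    linear_combination q.1 ^ 2 * h₂
      - m * (q.1 ^ 2 - q.1 * q.2 - (1 - p.1) + l * q.1 - l * q.1 ^ 2) * hxy q hq
  · intro q hq q' hq' hxx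
    refine Prod.ext hxx (mul_left_cancel₀ (hx q hq) ?_)
    rw [hxy q hq, hxx, ← hxy q' hq', ← hxx]

end Fibre

/-- For λ > 0, μ > 0, the preimage of any point under Φ_{λ,μ} is a finite set with at
most four points. -/
theorem stmt_8 (l m : ℝ) (hl : 0 < l) (hm : 0 < m) (p : ℝ × ℝ) :
    (Phi l m ⁻¹' {p}).Finite ∧ (Phi l m ⁻¹' {p}).ncard ≤ 4 := by
  by_cases hp : p.1 = 1
  · exact finite_and_ncard_le_four_preimage_Phi_of_fst_eq_one hl.ne' hm.ne' hp
  · exact finite_and_ncard_le_four_preimage_Phi_of_fst_ne_one hm.ne' hp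
end
end

section
/- Let 0 < λ < 1 and let μ be real. For every x with 0 ≤ x < 1/λ, the iterates Φ_{λ,μ}ⁿ(x, 0) converge to the fixed point (1, 0) as n → ∞. -/
/-!
On the invariant axis `y = 0` the map reduces to the one-dimensional map
`axisMap λ a = 1 - λ a (1 - a)`, for which `axisMap λ a - 1 = λ a (a - 1)`. With `M = max 1 x` we have `λ M < 1`,
the interval `[0, M]` is invariant, and on it the map contracts distances to the fixed point `1`
by the factor `λ M`, so the iterates converge geometrically to `1`.
-/

noncomputable section

open Filter Set Topology

theorem dist_iterate_le_of_contractsTo {X : Type*} [PseudoMetricSpace X] {f : X → X} {s : Set X}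
    {p x : X} {c : ℝ} (hs : MapsTo f s s) (hc : 0 ≤ c)
    (hf : ∀ a ∈ s, dist (f a) p ≤ c * dist a p) (hx : x ∈ s) (n : ℕ) :
    dist (f^[n] x) p ≤ c ^ n * dist x p := by
  induction n with
  | zero => simp
  | succ n ih =>
    rw [Function.iterate_succ_apply', pow_succ']
    calc dist (f (f^[n] x)) p ≤ c * dist (f^[n] x) p := hf _ (hs.iterate n hx)
      _ ≤ c * (c ^ n * dist x p) := mul_le_mul_of_nonneg_left ih hc
      _ = c * c ^ n * dist x p := by ring

theorem tendsto_iterate_of_contractsTo {X : Type*} [PseudoMetricSpace X] {f : X → X} {s : Set X}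
    {p x : X} {c : ℝ} (hs : MapsTo f s s) (hc0 : 0 ≤ c) (hc1 : c < 1)
    (hf : ∀ a ∈ s, dist (f a) p ≤ c * dist a p) (hx : x ∈ s) :
    Tendsto (fun n => f^[n] x) atTop (𝓝 p) := by
  rw [tendsto_iff_dist_tendsto_zero]
  have hgeom : Tendsto (fun n : ℕ => c ^ n * dist x p) atTop (𝓝 0) := by
    simpa using (tendsto_pow_atTop_nhds_zero_of_lt_one hc0 hc1).mul_const (dist x p)
  exact squeeze_zero (fun _ => dist_nonneg)
    (dist_iterate_le_of_contractsTo hs hc0 hf hx) hgeom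

def axisMap (l a : ℝ) : ℝ := 1 - a * (l * (1 - a))

theorem Phi_iterate_axis (l m x : ℝ) (n : ℕ) :
    (Phi l m)^[n] (x, 0) = ((axisMap l)^[n] x, 0) := by
  induction n with
  | zero => rfl
  | succ n ih =>
    rw [Function.iterate_succ_apply', Function.iterate_succ_apply', ih]
    simp [Phi, axisMap]

theorem axisMap_sub_one (l a : ℝ) : axisMap l a - 1 = l * a * (a - 1) := by
  unfold axisMap; ring

theorem mapsTo_axisMap_Icc {l M : ℝ} (hl : 0 ≤ l) (hlM : l * M ≤ 1) (hM : 1 ≤ M) : MapsTo (axisMap l) (Icc 0 M) (Icc 0 M) := by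
  rintro a ⟨ha0, haM⟩
  have hg := axisMap_sub_one l a
  have hla : l * a ≤ 1 := le_trans (mul_le_mul_of_nonneg_left haM hl) hlM
  constructor
  · rcases le_or_gt a 1 with h | h
    · -- `l ≤ l * M ≤ 1` and `a (1 - a) ≤ 1/4`
      have hl1 : l ≤ 1 := by nlinarith
      nlinarith [sq_nonneg (2 * a - 1), mul_nonneg hl (sq_nonneg (2 * a - 1))]
    · nlinarith [mul_nonneg (mul_nonneg hl ha0) (sub_nonneg.2 h.le)]
  · rcases le_or_gt a 1 with h | h
    · nlinarith [mul_nonneg (mul_nonneg hl ha0) (sub_nonneg.2 h)]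
    · nlinarith

theorem dist_axisMap_one_le {l M a : ℝ} (hl : 0 ≤ l) (ha : a ∈ Icc 0 M) :
    dist (axisMap l a) 1 ≤ l * M * dist a 1 := by
  rw [Real.dist_eq, Real.dist_eq, axisMap_sub_one, abs_mul, abs_of_nonneg (mul_nonneg hl ha.1)]
  exact mul_le_mul_of_nonneg_right (mul_le_mul_of_nonneg_left ha.2 hl) (abs_nonneg _)

/-- For 0 < λ < 1 and any real μ: for every 0 ≤ x < 1/λ the iterates Φ_{λ,μ}ⁿ(x,0)
converge to the fixed point (1,0). -/
theorem stmt_11 (l m x : ℝ) (hl0 : 0 < l) (hl1 : l < 1) (hx0 : 0 ≤ x)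
    (hx1 : x < 1 / l) :
    Filter.Tendsto (fun n : ℕ => (Phi l m)^[n] (x, 0)) Filter.atTop
      (nhds ((1 : ℝ), (0 : ℝ))) := by
  have hlM : l * max 1 x < 1 := by
    rw [mul_max_of_nonneg _ _ hl0.le, mul_one]
    exact max_lt hl1 ((lt_div_iff₀' hl0).1 hx1)
  have hx : x ∈ Icc 0 (max 1 x) := ⟨hx0, le_max_right 1 x⟩
  have haxis : Tendsto (fun n => (axisMap l)^[n] x) atTop (𝓝 1) :=
    tendsto_iterate_of_contractsTo (mapsTo_axisMap_Icc hl0.le hlM.le (le_max_left 1 x))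
      (by positivity) hlM (fun _ => dist_axisMap_one_le hl0.le) hx
  simpa only [Phi_iterate_axis] using haxis.prodMk_nhds tendsto_const_nhds
end
end
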